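/- Let P ⊆ ℝ² be finite, let p ∈ P, and let q ∈ P∖{p} be a nearest neighbor of p, i.e., ‖p − q‖ = min_{r ∈ P∖{p}} ‖p − r‖. Then there exist l ∈ {0,1} and an l-tri, empty with respect to P, with both p and q on its boundary. In other words, the Equilateral Delaunay graph EDG(P) is a supergraph of the nearest neighbor graph NNG(P). -/

import Mathlib

/- Common geometric setup: the Euclidean plane, wedges `W_l`, bisectors `b_l`,
equilateral triangles `∆_l` and `l`-tri's, circular sectors `σ_l` and `l`-pies,
and the proximity graphs (Semi-Yao, nearest-neighbor, Equilateral/Pie Delaunay,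
Yao) together with Euclidean minimum spanning trees. -/

open Real EuclideanGeometry
open scoped RealInnerProductSpace

noncomputable section

abbrev E : Type := EuclideanSpace ℝ (Fin 2)

/-- The point `(a, b)` in the Euclidean plane. -/
def pt (a b : ℝ) : E := (WithLp.equiv 2 (Fin 2 → ℝ)).symm ![a, b]

/-- The unit vector at polar angle `θ`. -/
def dir (θ : ℝ) : E := pt (Real.cos θ) (Real.sin θ)

/-- The lower boundary angle `(2l-1)π/6` of the `l`-th wedge. -/
def lo (l : Fin 6) : ℝ := (2 * ((l : ℕ) : ℝ) - 1) * π / 6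

/-- The upper boundary angle `(2l+1)π/6` of the `l`-th wedge. -/
def hi (l : Fin 6) : ℝ := (2 * ((l : ℕ) : ℝ) + 1) * π / 6

/-- The half-open wedge `W_l`: all nonzero points whose polar angle (mod `2π`)
lies in `[(2l-1)π/6, (2l+1)π/6)`. -/
def wedge (l : Fin 6) : Set E :=
  {x | x ≠ 0 ∧ ∃ θ : ℝ, lo l ≤ θ ∧ θ < hi l ∧ x = ‖x‖ • dir θ}

/-- `W_l(p)`, the translate of `W_l` with apex `p`. -/
def wedgeAt (l : Fin 6) (p : E) : Set E := {x | x - p ∈ wedge l}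

/-- The unit bisector vector `b_l = (cos(lπ/3), sin(lπ/3))` of `W_l`. -/
def bvec (l : Fin 6) : E := dir (((l : ℕ) : ℝ) * π / 3)

/-- `V_l(p) = P ∩ W_l(p)`. -/
def Vl (P : Finset E) (l : Fin 6) (p : E) : Set E := {x | x ∈ P ∧ x ∈ wedgeAt l p}

/-- The closed equilateral triangle `∆_l` with vertices `0`, `dir ((2l-1)π/6)`,
`dir ((2l+1)π/6)`. -/
def tri (l : Fin 6) : Set E := convexHull ℝ {0, dir (lo l), dir (hi l)}

/-- The vertex set of `∆_l`. -/
def triVerts (l : Fin 6) : Set E := {0, dir (lo l), dir (hi l)}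

/-- The `l`-tri `c + lam • ∆_l`. -/
def lTri (l : Fin 6) (c : E) (lam : ℝ) : Set E := (fun x => c + lam • x) '' tri l

/-- The closed circular sector (piece of pie) `σ_l` of the unit disk. -/
def sector (l : Fin 6) : Set E :=
  {x | ‖x‖ ≤ 1 ∧ (x = 0 ∨ ∃ θ : ℝ, lo l ≤ θ ∧ θ ≤ hi l ∧ x = ‖x‖ • dir θ)}

/-- The `l`-pie `c + lam • σ_l`. -/
def lPie (l : Fin 6) (c : E) (lam : ℝ) : Set E := (fun x => c + lam • x) '' sector l

/-- Directed Semi-Yao graph edge from `a` to `b`: `a ∈ V_l(b)` for some `l` and `a`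
has the minimum `b_l`-coordinate among the points of `V_l(b)`. -/
def SYG (P : Finset E) (a b : E) : Prop :=
  b ∈ P ∧ ∃ l : Fin 6, a ∈ Vl P l b ∧
    ∀ r ∈ Vl P l b, ⟪a - b, bvec l⟫ ≤ ⟪r - b, bvec l⟫

/-- Undirected Semi-Yao graph edge. -/
def SYGu (P : Finset E) (p q : E) : Prop := SYG P p q ∨ SYG P q p

/-- Directed nearest-neighbor graph edge from `a` to `b`: `b ∈ P \ {a}` and
`‖a - b‖ = min_{r ∈ P \ {a}} ‖a - r‖`. -/
def NNG (P : Finset E) (a b : E) : Prop :=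
  a ∈ P ∧ b ∈ P ∧ b ≠ a ∧ ∀ r ∈ P, r ≠ a → ‖a - b‖ ≤ ‖a - r‖

/-- Edge of the Equilateral Delaunay triangulation `EDT_l(P)`: there is an `l`-tri,
empty with respect to `P`, with both endpoints on its boundary. -/
def EDT (P : Finset E) (l : Fin 6) (p q : E) : Prop :=
  p ∈ P ∧ q ∈ P ∧ p ≠ q ∧ ∃ c : E, ∃ lam : ℝ, 0 < lam ∧
    p ∈ frontier (lTri l c lam) ∧ q ∈ frontier (lTri l c lam) ∧
    ∀ r ∈ P, r ∉ interior (lTri l c lam)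

/-- Edge of the Equilateral Delaunay graph `EDG(P) = EDT_0(P) ∪ EDT_1(P)`. -/
def EDG (P : Finset E) (p q : E) : Prop := EDT P 0 p q ∨ EDT P 1 p q

/-- Directed Yao-graph edge from `p` to `q`: `q ∈ V_l(p)` for some `l` and
`‖p - q‖ = min_{r ∈ V_l(p)} ‖p - r‖`. -/
def YG (P : Finset E) (p q : E) : Prop :=
  p ∈ P ∧ ∃ l : Fin 6, q ∈ Vl P l p ∧ ∀ r ∈ Vl P l p, ‖p - q‖ ≤ ‖p - r‖

/-- Edge of the Pie Delaunay triangulation `PDT_l(P)`: there is an `l`-pie, empty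
with respect to `P`, with both endpoints on its boundary. -/
def PDT (P : Finset E) (l : Fin 6) (p q : E) : Prop :=
  p ∈ P ∧ q ∈ P ∧ p ≠ q ∧ ∃ c : E, ∃ lam : ℝ, 0 < lam ∧
    p ∈ frontier (lPie l c lam) ∧ q ∈ frontier (lPie l c lam) ∧
    ∀ r ∈ P, r ∉ interior (lPie l c lam)

/-- Edge of the Pie Delaunay graph `PDG(P) = PDT_0(P) ∪ ⋯ ∪ PDT_5(P)`. -/
def PDG (P : Finset E) (p q : E) : Prop := ∃ l : Fin 6, PDT P l p q

/-- Total Euclidean edge weight of a graph on the points of `P`. -/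
def edgeWeight (P : Finset E) (G : SimpleGraph {x // x ∈ P}) : ℝ :=
  ∑ e ∈ G.edgeSet.toFinite.toFinset,
    Sym2.lift ⟨fun (a b : {x // x ∈ P}) => ‖(a : E) - (b : E)‖,
      fun _ _ => norm_sub_rev _ _⟩ e

/-- `T` is a Euclidean minimum spanning tree of `P`: a spanning tree (connected and
acyclic graph on the vertex set `P`) of minimum total Euclidean edge weight. -/
def IsEMST (P : Finset E) (T : SimpleGraph {x // x ∈ P}) : Prop :=
  T.IsTree ∧ ∀ G : SimpleGraph {x // x ∈ P}, G.IsTree → edgeWeight P T ≤ edgeWeight P G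


/-!
If `q` is a nearest neighbour of `p`, write `p - q = x • a + y • b` with `x, y ≥ 0`, where `a, b`
are consecutive vertices of the regular hexagon `±dir (±π/6), ±dir (π/2)`. The equilateral
triangle with apex `q` and edge vectors `(x + y) • a`, `(x + y) • b` has `p` on its far side, and
its vertices are at distance `‖p - q‖`, `y`, `x` from `p`, while `‖p - q‖² = x² + xy + y²`.
So the triangle lies in the closed disk of radius `‖p - q‖` about `p`; its interior lies in the
open disk, which contains no point of `P`, and `p`, `q` are on its boundary. Rotating by `2π/3`
preserves the families of `0`-tris and of `1`-tris, so each of the six triangles is one of them.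
-/

section InnerProductSpace

variable {V : Type*} [NormedAddCommGroup V] [InnerProductSpace ℝ V]

def IsEquilateralPair (a b : V) : Prop := ‖a‖ = 1 ∧ ‖b‖ = 1 ∧ ⟪a, b⟫ = 1 / 2

def apexTriangle (q a b : V) (lam : ℝ) : Set V := convexHull ℝ {q, q + lam • a, q + lam • b}

theorem apexTriangle_rotate (q a b : V) (lam : ℝ) :
    apexTriangle q (b - a) (-a) lam = apexTriangle (q - lam • a) a b lam := by
  have h₁ : q - lam • a + lam • a = q := sub_add_cancel q _
  have h₂ : q - lam • a + lam • b = q + lam • (b - a) := by module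
  rw [apexTriangle, apexTriangle, h₁, h₂, smul_neg, ← sub_eq_add_neg]
  congr 1
  ext
  simp only [Set.mem_insert_iff, Set.mem_singleton_iff]
  tauto

theorem add_smul_add_smul_mem_apexTriangle (q a b : V) {x y : ℝ} (hx : 0 ≤ x) (hy : 0 ≤ y)
    (hxy : 0 < x + y) : q + x • a + y • b ∈ apexTriangle q a b (x + y) := by
  rw [apexTriangle]
  refine segment_subset_convexHull (x := q + (x + y) • a) (y := q + (x + y) • b) (by simp)
    (by simp) (mem_segment_iff_div.mpr ⟨x, y, hx, hy, hxy, ?_⟩)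
  have hsum : x / (x + y) + y / (x + y) = 1 := by field_simp
  simp only [smul_add, smul_smul, div_mul_cancel₀ _ hxy.ne']
  linear_combination (norm := module) hsum • q

theorem mem_frontier_of_isMaxOn_inner {T : Set V} {v p : V} (hv : v ≠ 0) (hp : p ∈ T)
    (hmax : IsMaxOn (fun z => ⟪v, z⟫) T p) : p ∈ frontier T := by
  refine ⟨subset_closure hp, fun hint => hv ?_⟩
  have hzero := (hmax.isLocalMax (mem_interior_iff_mem_nhds.mp hint)).hasFDerivAt_eq_zero
    (innerSL ℝ v).hasFDerivAt
  simpa using congrArg (fun f => f v) hzero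

namespace IsEquilateralPair

variable {a b : V}

theorem norm_smul_add_smul_sq (h : IsEquilateralPair a b) (s t : ℝ) :
    ‖s • a + t • b‖ ^ 2 = s ^ 2 + s * t + t ^ 2 := by
  obtain ⟨ha, hb, hab⟩ := h
  rw [norm_add_sq_real, norm_smul, norm_smul, inner_smul_left, inner_smul_right, ha, hb, hab]
  simp only [Real.norm_eq_abs, conj_trivial, mul_one, sq_abs]
  ring

theorem add_ne_zero (h : IsEquilateralPair a b) : a + b ≠ 0 := by
  obtain ⟨ha, -, hab⟩ := h
  intro hsum
  rw [eq_neg_of_add_eq_zero_right hsum, inner_neg_right, real_inner_self_eq_norm_sq, ha] at hab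
  norm_num at hab

theorem rotate (h : IsEquilateralPair a b) : IsEquilateralPair (b - a) (-a) := by
  obtain ⟨ha, hb, hab⟩ := h
  refine ⟨?_, by rw [norm_neg, ha], ?_⟩
  · rw [← pow_eq_one_iff_of_nonneg (norm_nonneg _) two_ne_zero, norm_sub_sq_real, ha, hb,
      real_inner_comm, hab]
    norm_num
  · rw [inner_neg_right, inner_sub_left, real_inner_self_eq_norm_sq, real_inner_comm, hab, ha]
    norm_num

theorem apexTriangle_subset_closedBall (h : IsEquilateralPair a b) (q : V) {x y : ℝ}
    (hx : 0 ≤ x) (hy : 0 ≤ y) :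
    apexTriangle q a b (x + y) ⊆
      Metric.closedBall (q + x • a + y • b) ‖x • a + y • b‖ := by
  have hdist : ∀ s t : ℝ, s ^ 2 + s * t + t ^ 2 ≤ x ^ 2 + x * y + y ^ 2 →
      ∀ z, z - (q + x • a + y • b) = s • a + t • b →
      z ∈ Metric.closedBall (q + x • a + y • b) ‖x • a + y • b‖ := by
    intro s t hst z hz
    rw [Metric.mem_closedBall, dist_eq_norm, hz, ← pow_le_pow_iff_left₀ (norm_nonneg _)
      (norm_nonneg _) two_ne_zero, h.norm_smul_add_smul_sq, h.norm_smul_add_smul_sq]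
    exact hst
  refine convexHull_min ?_ (convex_closedBall _ _)
  rintro z (rfl | rfl | rfl)
  · exact hdist (-x) (-y) (by nlinarith) _ (by module)
  · exact hdist y (-y) (by nlinarith) _ (by module)
  · exact hdist (-x) x (by nlinarith) _ (by module)

theorem isMaxOn_inner_apexTriangle (h : IsEquilateralPair a b) (q : V) {x y : ℝ}
    (hx : 0 ≤ x) (hy : 0 ≤ y) :
    IsMaxOn (fun z => ⟪a + b, z⟫) (apexTriangle q a b (x + y)) (q + x • a + y • b) := by
  obtain ⟨ha, hb, hab⟩ := h
  have hva : ⟪a + b, a⟫ = 3 / 2 := by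
    rw [inner_add_left, real_inner_self_eq_norm_sq, ha, real_inner_comm, hab]; norm_num
  have hvb : ⟪a + b, b⟫ = 3 / 2 := by
    rw [inner_add_left, real_inner_self_eq_norm_sq, hb, hab]; norm_num
  refine convexHull_min ?_ (convex_halfSpace_le
    ⟨inner_add_right _, fun c z => by rw [inner_smul_right, smul_eq_mul]⟩ _)
  rintro z (rfl | rfl | rfl) <;>
    simp only [Set.mem_ofPred_eq, inner_add_right, inner_smul_right, hva, hvb] <;> linarith

theorem linearIndependent (h : IsEquilateralPair a b) : LinearIndependent ℝ ![a, b] := by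
  obtain ⟨ha, hb, hab⟩ := h
  refine LinearIndependent.pair_iff.mpr fun s t hst => ?_
  have hia := congrArg (fun z => ⟪a, z⟫) hst
  have hib := congrArg (fun z => ⟪b, z⟫) hst
  simp only [inner_add_right, inner_smul_right, real_inner_self_eq_norm_sq, ha, hb, hab,
    real_inner_comm a b, inner_zero_right] at hia hib
  constructor <;> linarith

theorem exists_eq_smul_add_smul [FiniteDimensional ℝ V] (hV : Module.finrank ℝ V = 2)
    (h : IsEquilateralPair a b) (u : V) : ∃ x y : ℝ, u = x • a + y • b := by
  have hspan := h.linearIndependent.span_eq_top_of_card_eq_finrank (by simp [hV])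
  obtain ⟨x, y, hu⟩ := Submodule.mem_span_pair.mp
    (by rw [← Matrix.range_cons_cons_empty, hspan]; trivial : u ∈ Submodule.span ℝ {a, b})
  exact ⟨x, y, hu.symm⟩

end IsEquilateralPair

end InnerProductSpace

/-- For an equilateral pair `(a, b)`, the map `(a, b) ↦ (b - a, -a)` is the rotation by `2π/3`,
so the six pairs reached from `(A, B)` and `(B, B - A)` are consecutive vertices of a regular
hexagon, and the cones they span cover the plane. -/
theorem exists_nonneg_smul_add_smul_of_rotate {M : Type*} [AddCommGroup M] [Module ℝ M]
    (S : M → M → Prop) {A B : M} (h₀ : S A B) (h₁ : S B (B - A))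
    (hrot : ∀ a b, S a b → S (b - a) (-a)) (x y : ℝ) :
    ∃ a b, S a b ∧
      ∃ s t : ℝ, 0 ≤ s ∧ 0 ≤ t ∧ x • A + y • B = s • a + t • b := by
  have h₂ := hrot _ _ h₀
  have h₃ := hrot _ _ h₁
  have h₄ := hrot _ _ h₂
  have h₅ := hrot _ _ h₃
  rcases le_total 0 x with hx | hx <;> rcases le_total 0 y with hy | hy
  · exact ⟨_, _, h₀, x, y, hx, hy, rfl⟩
  · rcases le_total 0 (x + y) with hxy | hxy
    · exact ⟨_, _, h₅, -y, x + y, by linarith, hxy, by module⟩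
    · exact ⟨_, _, h₄, -(x + y), x, by linarith, hx, by module⟩
  · rcases le_total 0 (x + y) with hxy | hxy
    · exact ⟨_, _, h₁, x + y, -x, hxy, by linarith, by module⟩
    · exact ⟨_, _, h₂, y, -(x + y), hy, by linarith, by module⟩
  · exact ⟨_, _, h₃, -x, -y, by linarith, by linarith, by module⟩

theorem inner_dir (θ φ : ℝ) : ⟪dir θ, dir φ⟫ = cos (θ - φ) := by
  simp only [dir, pt, WithLp.equiv_symm_apply, PiLp.inner_apply, RCLike.inner_apply,
    conj_trivial, Fin.sum_univ_two, Matrix.cons_val_zero, Matrix.cons_val_one,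
    Matrix.cons_val_fin_one, cos_sub]
  ring

theorem norm_dir (θ : ℝ) : ‖dir θ‖ = 1 := by
  rw [← pow_eq_one_iff_of_nonneg (norm_nonneg _) two_ne_zero, ← real_inner_self_eq_norm_sq,
    inner_dir, sub_self, cos_zero]

theorem dir_add_pi_div_three (θ : ℝ) : dir (θ + π / 3) = dir θ - dir (θ - π / 3) := by
  have hcos : cos (θ + π / 3) = cos θ - cos (θ - π / 3) := by
    rw [cos_add, cos_sub, cos_pi_div_three]; ring
  have hsin : sin (θ + π / 3) = sin θ - sin (θ - π / 3) := by
    rw [sin_add, sin_sub, cos_pi_div_three]; ring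
  ext i
  fin_cases i <;> simp [dir, pt, hcos, hsin]

theorem isEquilateralPair_dir (θ : ℝ) : IsEquilateralPair (dir θ) (dir (θ + π / 3)) := by
  refine ⟨norm_dir _, norm_dir _, ?_⟩
  rw [inner_dir, sub_add_cancel_left, cos_neg, cos_pi_div_three]

theorem hi_eq_lo_add (l : Fin 6) : hi l = lo l + π / 3 := by
  simp only [hi, lo]; ring

theorem lo_one : lo 1 = hi 0 := by
  norm_num [lo, hi]

theorem lTri_eq_apexTriangle (l : Fin 6) (c : E) (lam : ℝ) :
    lTri l c lam = apexTriangle c (dir (lo l)) (dir (hi l)) lam := by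
  have hmap : (fun x : E => c + lam • x)
      = ⇑(AffineMap.const ℝ E c + (lam • LinearMap.id : E →ₗ[ℝ] E).toAffineMap) := by
    funext x; simp
  rw [lTri, tri, hmap, AffineMap.image_convexHull, apexTriangle, ← hmap]
  simp [Set.image_insert_eq]

def IsEDGFrame (a b : E) : Prop :=
  IsEquilateralPair a b ∧
    ∀ (q : E) (lam : ℝ), ∃ l : Fin 6, (l = 0 ∨ l = 1) ∧
      ∃ c, lTri l c lam = apexTriangle q a b lam

theorem isEDGFrame_dir_lo_hi {l : Fin 6} (hl : l = 0 ∨ l = 1) :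
    IsEDGFrame (dir (lo l)) (dir (hi l)) :=
  ⟨hi_eq_lo_add l ▸ isEquilateralPair_dir (lo l),
    fun q lam => ⟨l, hl, q, lTri_eq_apexTriangle l q lam⟩⟩

theorem isEDGFrame_dir_hi_zero :
    IsEDGFrame (dir (hi 0)) (dir (hi 0) - dir (lo 0)) := by
  have h := isEDGFrame_dir_lo_hi (l := 1) (Or.inr rfl)
  rwa [hi_eq_lo_add 1, lo_one, dir_add_pi_div_three, sub_eq_of_eq_add (hi_eq_lo_add 0)] at h

theorem IsEDGFrame.rotate {a b : E} (h : IsEDGFrame a b) : IsEDGFrame (b - a) (-a) := by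
  refine ⟨h.1.rotate, fun q lam => ?_⟩
  obtain ⟨l, hl, c, hc⟩ := h.2 (q - lam • a) lam
  exact ⟨l, hl, c, hc.trans (apexTriangle_rotate q a b lam).symm⟩

theorem EDT_of_subset_closedBall {P : Finset E} {p q : E} (hpq : NNG P p q) {l : Fin 6} {c : E}
    {lam : ℝ} (hlam : 0 < lam) (hq : q ∈ lTri l c lam) (hp : p ∈ frontier (lTri l c lam))
    (hball : lTri l c lam ⊆ Metric.closedBall p ‖p - q‖) : EDT P l p q := by
  obtain ⟨hpP, hqP, hne, hmin⟩ := hpq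
  have hint : interior (lTri l c lam) ⊆ Metric.ball p ‖p - q‖ := by
    rw [← interior_closedBall p (norm_ne_zero_iff.mpr (sub_ne_zero.mpr hne.symm))]
    exact interior_mono hball
  refine ⟨hpP, hqP, hne.symm, c, lam, hlam, hp, ⟨subset_closure hq, fun hqi => ?_⟩,
    fun r hr hri => ?_⟩
  · have hqp := hint hqi
    rw [Metric.mem_ball, dist_eq_norm, norm_sub_rev] at hqp
    exact lt_irrefl _ hqp
  · have hrp : r ≠ p := fun h => hp.2 (h ▸ hri)
    have hrp' := hint hri
    rw [Metric.mem_ball, dist_eq_norm, norm_sub_rev] at hrp'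
    exact (hmin r hr hrp).not_gt hrp'

theorem EDT_of_lTri_eq_apexTriangle {P : Finset E} {p q : E} (hpq : NNG P p q) {a b : E}
    (hab : IsEquilateralPair a b) {x y : ℝ} (hx : 0 ≤ x) (hy : 0 ≤ y)
    (hu : p - q = x • a + y • b) {l : Fin 6} {c : E}
    (hT : lTri l c (x + y) = apexTriangle q a b (x + y)) : EDT P l p q := by
  obtain rfl : p = q + x • a + y • b := by rw [add_assoc, ← hu, add_sub_cancel]
  have hxy : 0 < x + y := by
    refine lt_of_le_of_ne (add_nonneg hx hy) fun h => hpq.2.2.1 ?_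
    obtain ⟨rfl, rfl⟩ : x = 0 ∧ y = 0 := ⟨by linarith, by linarith⟩
    simp
  refine EDT_of_subset_closedBall (c := c) hpq hxy ?_ ?_ ?_ <;> rw [hT]
  · exact subset_convexHull ℝ _ (Set.mem_insert _ _)
  · exact mem_frontier_of_isMaxOn_inner hab.add_ne_zero
      (add_smul_add_smul_mem_apexTriangle q a b hx hy hxy) (hab.isMaxOn_inner_apexTriangle q hx hy)
  · rw [hu]
    exact hab.apexTriangle_subset_closedBall q hx hy

/-- if `q` is a nearest neighbor of `p` in `P`, then there exist `l ∈ {0,1}`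
and an `l`-tri, empty with respect to `P`, with both `p` and `q` on its boundary; i.e.,
the Equilateral Delaunay graph is a supergraph of the nearest neighbor graph. -/
theorem EDG_supergraph_of_nearestNeighborGraph
    (P : Finset E) (p q : E) (hp : p ∈ P) (hq : q ∈ P) (hne : q ≠ p)
    (hmin : ∀ r ∈ P, r ≠ p → ‖p - q‖ ≤ ‖p - r‖) : EDG P p q := by
  have h₀ := isEDGFrame_dir_lo_hi (l := 0) (Or.inl rfl)
  obtain ⟨x, y, hxy⟩ := h₀.1.exists_eq_smul_add_smul finrank_euclideanSpace_fin (p - q)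
  obtain ⟨a, b, hab, s, t, hs, ht, hst⟩ := exists_nonneg_smul_add_smul_of_rotate IsEDGFrame h₀
    isEDGFrame_dir_hi_zero (fun _ _ h => h.rotate) x y
  obtain ⟨l, hl, c, hT⟩ := hab.2 q (s + t)
  have hEDT := EDT_of_lTri_eq_apexTriangle ⟨hp, hq, hne, hmin⟩ hab.1 hs ht (hxy.trans hst) hT
  rcases hl with rfl | rfl
  exacts [Or.inl hEDT, Or.inr hEDT]
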